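/- For a chi-square random variable C with d degrees of freedom, for all x > 0, P(C ≥ d + 2√(dx) + 2x) ≤ exp(-x). -/

import Mathlib

/-!
Chernoff bound: for a standard Gaussian `c`, `𝔼 exp (t c²) = (1 - 2t)^(-1/2)` when `t < 1/2`, so
`P(C ≥ a) ≤ exp (-t a) (1 - 2t)^(-d/2)`. Write the threshold as `a = d q` with
`q = 1 + 2s + 2s²`, `s = √(x / d)`; the optimal `t` has `1 - 2t = 1/q`, which gives the bound
`exp (-d (s + s²)) q^(d/2)`, and `q ≤ 1 + 2s + (2s)²/2 ≤ exp (2s)` turns it into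
`exp (-d s²) = exp (-x)`.
-/

open MeasureTheory ProbabilityTheory Real
open scoped NNReal

namespace ProbabilityTheory

-- For `1 ≤ 2 * v * t` both sides are junk zeros: the integrand is not integrable, and `√` of a
-- nonpositive number is `0`.
lemma integral_exp_mul_sq_gaussianReal (v : ℝ≥0) (t : ℝ) :
    ∫ y, exp (t * y ^ 2) ∂gaussianReal 0 v = (√(1 - 2 * v * t))⁻¹ := by
  rcases eq_or_ne v 0 with rfl | hv
  · simp [gaussianReal_zero_var]
  have hv' : (0 : ℝ) < v := by positivity
  set b : ℝ := (2 * (v : ℝ))⁻¹ - t with hb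
  have hpdf (y : ℝ) : gaussianPDFReal 0 v y * exp (t * y ^ 2)
      = (√(2 * π * v))⁻¹ * exp (-b * y ^ 2) := by
    rw [gaussianPDFReal, mul_assoc, ← exp_add]
    congr 2
    rw [hb]
    field_simp
    ring
  calc ∫ y, exp (t * y ^ 2) ∂gaussianReal 0 v
      = (√(2 * π * v))⁻¹ * √(π / b) := by
        simp_rw [integral_gaussianReal_eq_integral_smul hv, smul_eq_mul, hpdf,
          integral_const_mul, integral_gaussian]
    _ = √((π / b) / (2 * π * v)) := by
        rw [sqrt_div' (π / b) (by positivity)]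
        ring
    _ = (√(1 - 2 * v * t))⁻¹ := by
        rw [← sqrt_inv, show 1 - 2 * v * t = 2 * v * b by rw [hb]; field_simp]
        field_simp

variable {Ω ι : Type*} [MeasurableSpace Ω] {μ : Measure Ω} {v : ℝ≥0}

lemma HasLaw.mgf_sq_gaussianReal {X : Ω → ℝ} (hX : HasLaw X (gaussianReal 0 v) μ) (t : ℝ) :
    mgf (fun ω ↦ X ω ^ 2) μ t = (√(1 - 2 * v * t))⁻¹ := by
  rw [← integral_exp_mul_sq_gaussianReal, mgf, ← hX.integral_comp (by fun_prop)]
  rfl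

lemma iIndepFun.mgf_sum_sq_gaussianReal [Fintype ι] {X : ι → Ω → ℝ} (hindep : iIndepFun X μ)
    (hX : ∀ i, HasLaw (X i) (gaussianReal 0 v) μ) (t : ℝ) :
    mgf (fun ω ↦ ∑ i, X i ω ^ 2) μ t = (√(1 - 2 * v * t))⁻¹ ^ Fintype.card ι := by
  have hsq : iIndepFun (fun i ω ↦ X i ω ^ 2) μ :=
    hindep.comp (fun _ y ↦ y ^ 2) fun _ ↦ by fun_prop
  rw [← Finset.sum_fn, hsq.mgf_sum₀ (fun i ↦ (hX i).aemeasurable.pow_const 2)]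
  simp [(hX _).mgf_sq_gaussianReal]

lemma iIndepFun.measureReal_sum_sq_ge_le [Fintype ι] [IsProbabilityMeasure μ]
    {X : ι → Ω → ℝ} (hindep : iIndepFun X μ) (hX : ∀ i, HasLaw (X i) (gaussianReal 0 1) μ)
    (a : ℝ) {t : ℝ} (ht₀ : 0 ≤ t) (ht : 2 * t < 1) :
    μ.real {ω | a ≤ ∑ i, X i ω ^ 2} ≤ exp (-t * a) * (√(1 - 2 * t))⁻¹ ^ Fintype.card ι := by
  have hmgf := hindep.mgf_sum_sq_gaussianReal hX t
  rw [NNReal.coe_one, mul_one] at hmgf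
  have hint : Integrable (fun ω ↦ exp (t * ∑ i, X i ω ^ 2)) μ := by
    refine Integrable.of_integral_ne_zero ?_
    rw [← mgf, hmgf]
    have : 0 < 1 - 2 * t := by linarith
    positivity
  simpa only [hmgf] using measure_ge_le_exp_mul_mgf a ht₀ hint

theorem iIndepFun.measureReal_sum_sq_ge_le_exp [Fintype ι] [IsProbabilityMeasure μ]
    {X : ι → Ω → ℝ} (hindep : iIndepFun X μ) (hX : ∀ i, HasLaw (X i) (gaussianReal 0 1) μ)
    {s : ℝ} (hs : 0 ≤ s) :
    μ.real {ω | Fintype.card ι * (1 + 2 * s + 2 * s ^ 2) ≤ ∑ i, X i ω ^ 2}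
      ≤ exp (-(Fintype.card ι * s ^ 2)) := by
  set n := Fintype.card ι
  set q := 1 + 2 * s + 2 * s ^ 2
  have hq : 0 < q := by positivity
  -- the minimiser of the Chernoff exponent `-t a - (n/2) log (1 - 2t)` at `a = n q`
  set t := (s + s ^ 2) / q
  have h1t : 1 - 2 * t = q⁻¹ := by simp only [t, q]; field_simp; ring
  have hq_le : q ≤ exp s ^ 2 :=
    calc q = 1 + 2 * s + (2 * s) ^ 2 / 2 := by ring
      _ ≤ exp (2 * s) := quadratic_le_exp_of_nonneg (by positivity)
      _ = exp s ^ 2 := by rw [← exp_nat_mul]; norm_num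
  calc μ.real {ω | n * q ≤ ∑ i, X i ω ^ 2}
      ≤ exp (-t * (n * q)) * (√(1 - 2 * t))⁻¹ ^ n :=
        hindep.measureReal_sum_sq_ge_le hX _ (by positivity) (by linarith [inv_pos.2 hq])
    _ = exp (-(n * (s + s ^ 2))) * √q ^ n := by
        rw [h1t, sqrt_inv, inv_inv]; congr 2; simp only [t]; field_simp
    _ ≤ exp (-(n * (s + s ^ 2))) * exp s ^ n := by
        gcongr
        exact sqrt_le_iff.2 ⟨(exp_pos s).le, hq_le⟩
    _ = exp (-(n * s ^ 2)) := by
        rw [← exp_nat_mul, ← exp_add]; ring_nf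

end ProbabilityTheory

theorem chi_square_upper_tail_general
    {Ω : Type*} [MeasurableSpace Ω] (μ : Measure Ω) [IsProbabilityMeasure μ]
    (d : ℕ) (c : Fin d → Ω → ℝ)
    (hindep : iIndepFun c μ)
    (hgauss : ∀ i, μ.map (c i) = gaussianReal 0 1)
    (x : ℝ) (hx : 0 < x) :
    μ {ω | (d : ℝ) + 2 * Real.sqrt (d * x) + 2 * x ≤ ∑ i, (c i ω) ^ 2}
      ≤ ENNReal.ofReal (Real.exp (-x)) := by
  obtain rfl | hd := Nat.eq_zero_or_pos d
  · have : ¬ 2 * x ≤ 0 := by linarith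
    simp [this]
  have hlaw (i : Fin d) : HasLaw (c i) (gaussianReal 0 1) μ :=
    ⟨.of_map_ne_zero (hgauss i ▸ IsProbabilityMeasure.ne_zero _), hgauss i⟩
  have hd' : (0 : ℝ) < d := by exact_mod_cast hd
  set s := √(x / d)
  have hx_eq : x = d * s ^ 2 := by rw [sq_sqrt (by positivity)]; field_simp
  have hdx : √(d * x) = d * s := by
    rw [hx_eq, ← mul_assoc, ← sq, sqrt_mul (sq_nonneg _), sqrt_sq hd'.le, sqrt_sq (sqrt_nonneg _)]
  have hthreshold : (d : ℝ) + 2 * √(d * x) + 2 * x = d * (1 + 2 * s + 2 * s ^ 2) := by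
    rw [hdx, hx_eq]; ring
  rw [hthreshold, ENNReal.le_ofReal_iff_toReal_le (measure_ne_top _ _) (exp_pos _).le, hx_eq]
  simpa [measureReal_def] using hindep.measureReal_sum_sq_ge_le_exp hlaw (sqrt_nonneg _)

/-- Laurent–Massart upper tail bound for a chi-square random variable with `d`
degrees of freedom, realized as `C = ∑ i, (c i)^2` for i.i.d. standard Gaussians `c i`. -/
theorem chi_square_upper_tail
    {Ω : Type*} [MeasurableSpace Ω] (μ : Measure Ω) [IsProbabilityMeasure μ]
    (d : ℕ) (c : Fin d → Ω → ℝ)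
    (hmeas : ∀ i, Measurable (c i))
    (hindep : iIndepFun c μ)
    (hgauss : ∀ i, μ.map (c i) = gaussianReal 0 1)
    (x : ℝ) (hx : 0 < x) :
    μ {ω | (d : ℝ) + 2 * Real.sqrt (d * x) + 2 * x ≤ ∑ i, (c i ω) ^ 2}
      ≤ ENNReal.ofReal (Real.exp (-x)) :=
  chi_square_upper_tail_general μ d c hindep hgauss x hx
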